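/- Let φ be holomorphic on a neighborhood of L·E_ρ (ρ > 1, L ≥ 1) with M := sup_{L·E_ρ}|φ|, and fix B > 0. Assume the Bernstein inequality E_m(h) ≤ C(ρ)·(sup_{E_ρ}|h|)·ρ^{-m}. Then for every f ∈ C([-1,1]) that is NOT real-analytic on [-1,1] — so that limsup_m E_m(f)^{1/m} = 1 — the network approximation errors ε_m := inf{‖f − g‖_∞ : g = ∑_{k=1}^m λ_k φ(α_k·), ∑|λ_k| ≤ B, |α_k| ≤ L} satisfy limsup_m ε_m^{1/m} = 1; in particular ε_m cannot decay geometrically. -/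

import Mathlib

open Filter

/-- Closed Bernstein ellipse region with parameter ρ (image of the annulus 1 ≤ |w| ≤ ρ
under the Joukowski map). -/
noncomputable def bernsteinRegion (ρ : ℝ) : Set ℂ :=
  {z | ∃ w : ℂ, 1 ≤ ‖w‖ ∧ ‖w‖ ≤ ρ ∧ z = (w + w⁻¹) / 2}

/-- Uniform norm of a function on [-1,1]. -/
noncomputable def uNorm (f : ℝ → ℝ) : ℝ :=
  sSup ((fun x => |f x|) '' Set.Icc (-1 : ℝ) 1)

/-- Error of best uniform approximation on [-1,1] by polynomials of degree ≤ m. -/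
noncomputable def bestApprox (m : ℕ) (f : ℝ → ℝ) : ℝ :=
  sInf {e : ℝ | ∃ p : Polynomial ℝ, p.natDegree ≤ m ∧
    ∀ x ∈ Set.Icc (-1 : ℝ) 1, |f x - Polynomial.eval x p| ≤ e}

/-!
A network `g = ∑ λₖ φ(αₖ ·)` with `∑ |λₖ| ≤ B` and `|αₖ| ≤ L` extends holomorphically to the
Bernstein region `E_ρ` by `z ↦ ∑ λₖ Φ(αₖ z)`, because `αₖ E_ρ ⊆ L E_ρ` (the region is a filled
ellipse with foci `±1`, hence convex and symmetric). There it is bounded by `B M`, so the Bernstein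
inequality gives `E_m(g) ≤ C(ρ) B M ρ⁻ᵐ`, and `E_m(f) ≤ ‖f - g‖ + E_m(g)` turns this into
`E_m(f) ≤ ε_m + C(ρ) B M ρ⁻ᵐ`. If `ε_m` decayed like `cᵐ` with `c < 1`, then so would `E_m(f)`,
contradicting `limsup E_m(f)^{1/m} = 1`; and `limsup ε_m^{1/m} ≤ 1` because `ε_m ≤ ‖f‖`.
-/

lemma strictMonoOn_add_inv : StrictMonoOn (fun t : ℝ => t + t⁻¹) (Set.Ici 1) := by
  intro a (ha : 1 ≤ a) b (hb : 1 ≤ b) hab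
  have key : b + b⁻¹ - (a + a⁻¹) = (b - a) * (a * b - 1) / (a * b) := by
    field_simp; ring
  have : 0 < (b - a) * (a * b - 1) / (a * b) := by
    apply div_pos (mul_pos _ _) <;> nlinarith
  show a + a⁻¹ < b + b⁻¹
  linarith

/-- The foci of the Joukowski image of a circle `|w| = r` are `±1`. -/
lemma norm_joukowski_sub_one_add_norm_add_one {w : ℂ} (hw : w ≠ 0) :
    ‖(w + w⁻¹) / 2 - 1‖ + ‖(w + w⁻¹) / 2 + 1‖ = ‖w‖ + ‖w‖⁻¹ := by
  have h₁ : (w + w⁻¹) / 2 - 1 = (w - 1) ^ 2 / (2 * w) := by field_simp; ring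
  have h₂ : (w + w⁻¹) / 2 + 1 = (w + 1) ^ 2 / (2 * w) := by field_simp; ring
  have parallelogram : ‖w - 1‖ ^ 2 + ‖w + 1‖ ^ 2 = 2 * ‖w‖ ^ 2 + 2 := by
    simp only [Complex.sq_norm, Complex.normSq_apply, Complex.sub_re, Complex.add_re,
      Complex.sub_im, Complex.add_im, Complex.one_re, Complex.one_im]
    ring
  have : 0 < ‖w‖ := norm_pos_iff.mpr hw
  rw [h₁, h₂, norm_div, norm_div, norm_pow, norm_pow, norm_mul, ← add_div, parallelogram,
    Complex.norm_two]
  field_simp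

lemma exists_joukowski_preimage (z : ℂ) : ∃ w : ℂ, 1 ≤ ‖w‖ ∧ z = (w + w⁻¹) / 2 := by
  obtain ⟨s, hs⟩ := IsAlgClosed.exists_pow_nat_eq (z ^ 2 - 1) two_pos
  have hprod : (z + s) * (z - s) = 1 := by linear_combination -hs
  have hnorm : ‖z + s‖ * ‖z - s‖ = 1 := by rw [← norm_mul, hprod, norm_one]
  rcases le_or_gt 1 ‖z + s‖ with h | h
  · refine ⟨z + s, h, ?_⟩
    rw [inv_eq_of_mul_eq_one_right hprod]; ring
  · refine ⟨z - s, ?_, ?_⟩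
    · nlinarith [norm_nonneg (z + s), norm_nonneg (z - s)]
    · rw [inv_eq_of_mul_eq_one_left hprod]; ring

lemma mem_bernsteinRegion_iff {ρ : ℝ} (hρ : 1 ≤ ρ) {z : ℂ} :
    z ∈ bernsteinRegion ρ ↔ ‖z - 1‖ + ‖z + 1‖ ≤ ρ + ρ⁻¹ := by
  constructor
  · rintro ⟨w, hw₁, hwρ, rfl⟩
    rw [norm_joukowski_sub_one_add_norm_add_one (norm_pos_iff.mp (by linarith))]
    exact strictMonoOn_add_inv.monotoneOn hw₁ hρ hwρ
  · intro hz
    obtain ⟨w, hw₁, rfl⟩ := exists_joukowski_preimage z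
    rw [norm_joukowski_sub_one_add_norm_add_one (norm_pos_iff.mp (by linarith))] at hz
    exact ⟨w, hw₁, (strictMonoOn_add_inv.le_iff_le hw₁ hρ).mp hz, rfl⟩

/-- `t z ± 1` is a convex combination of `z ± 1` and `-(z ∓ 1)`. -/
lemma ofReal_mul_mem_bernsteinRegion {ρ : ℝ} (hρ : 1 ≤ ρ) {t : ℝ} (ht : |t| ≤ 1) {z : ℂ}
    (hz : z ∈ bernsteinRegion ρ) : (t : ℂ) * z ∈ bernsteinRegion ρ := by
  rw [mem_bernsteinRegion_iff hρ] at hz ⊢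
  obtain ⟨ht₁, ht₂⟩ := abs_le.mp ht
  have convex_comb (a b : ℂ) : ‖((1 + t) / 2 : ℝ) * a + ((1 - t) / 2 : ℝ) * b‖
      ≤ (1 + t) / 2 * ‖a‖ + (1 - t) / 2 * ‖b‖ := by
    refine (norm_add_le _ _).trans_eq ?_
    rw [norm_mul, norm_mul, Complex.norm_real, Complex.norm_real, Real.norm_of_nonneg,
      Real.norm_of_nonneg] <;> linarith
  have e₁ := convex_comb (z - 1) (-(z + 1))
  have e₂ := convex_comb (z + 1) (-(z - 1))
  rw [norm_neg] at e₁ e₂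
  have h₁ : (t : ℂ) * z - 1 = ((1 + t) / 2 : ℝ) * (z - 1) + ((1 - t) / 2 : ℝ) * -(z + 1) := by
    push_cast; ring
  have h₂ : (t : ℂ) * z + 1 = ((1 + t) / 2 : ℝ) * (z + 1) + ((1 - t) / 2 : ℝ) * -(z - 1) := by
    push_cast; ring
  rw [h₁, h₂]
  linarith

lemma one_mem_bernsteinRegion {ρ : ℝ} (hρ : 1 ≤ ρ) : (1 : ℂ) ∈ bernsteinRegion ρ :=
  ⟨1, by simp, by simpa using hρ, by norm_num⟩

lemma ofReal_mem_bernsteinRegion {ρ : ℝ} (hρ : 1 ≤ ρ) {x : ℝ} (hx : x ∈ Set.Icc (-1 : ℝ) 1) :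
    (x : ℂ) ∈ bernsteinRegion ρ := by
  simpa using ofReal_mul_mem_bernsteinRegion hρ (abs_le.mpr hx) (one_mem_bernsteinRegion hρ)

lemma uNorm_nonneg (f : ℝ → ℝ) : 0 ≤ uNorm f :=
  Real.sSup_nonneg <| by rintro _ ⟨x, -, rfl⟩; exact abs_nonneg _

lemma abs_le_uNorm {f : ℝ → ℝ} (hf : ContinuousOn f (Set.Icc (-1 : ℝ) 1)) {x : ℝ}
    (hx : x ∈ Set.Icc (-1 : ℝ) 1) : |f x| ≤ uNorm f :=
  le_csSup (isCompact_Icc.bddAbove_image hf.abs) ⟨x, hx, rfl⟩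

lemma bestApprox_nonneg (m : ℕ) (f : ℝ → ℝ) : 0 ≤ bestApprox m f :=
  Real.sInf_nonneg <| by
    rintro e ⟨p, -, hp⟩
    exact (abs_nonneg _).trans (hp 0 ⟨by norm_num, by norm_num⟩)

lemma bestApprox_le {m : ℕ} {f : ℝ → ℝ} {p : Polynomial ℝ} (hp : p.natDegree ≤ m) {e : ℝ}
    (he : ∀ x ∈ Set.Icc (-1 : ℝ) 1, |f x - p.eval x| ≤ e) : bestApprox m f ≤ e :=
  csInf_le ⟨0, by rintro e' ⟨q, -, hq⟩; exact (abs_nonneg _).trans (hq 0 ⟨by norm_num, by norm_num⟩)⟩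
    ⟨p, hp, he⟩

lemma bestApprox_le_uNorm_sub_add {f g : ℝ → ℝ} (hf : ContinuousOn f (Set.Icc (-1 : ℝ) 1))
    (hg : ContinuousOn g (Set.Icc (-1 : ℝ) 1)) (m : ℕ) :
    bestApprox m f ≤ uNorm (fun x => f x - g x) + bestApprox m g := by
  rw [← sub_le_iff_le_add']
  refine le_csInf ⟨uNorm g, 0, by simp, fun x hx => by simpa using abs_le_uNorm hg hx⟩ ?_
  rintro e ⟨p, hp, hpe⟩
  rw [sub_le_iff_le_add']
  refine bestApprox_le hp fun x hx => ?_
  calc |f x - p.eval x| ≤ |f x - g x| + |g x - p.eval x| := abs_sub_le _ _ _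
    _ ≤ uNorm (fun x => f x - g x) + e := add_le_add (abs_le_uNorm (hf.sub hg) hx) (hpe x hx)

def BernsteinInequality (ρ Cρ : ℝ) : Prop :=
  ∀ (h : ℝ → ℝ) (H : ℂ → ℂ) (Mh : ℝ),
    DifferentiableOn ℂ H (bernsteinRegion ρ) →
    (∀ x ∈ Set.Icc (-1 : ℝ) 1, H x = h x) →
    (∀ z ∈ bernsteinRegion ρ, ‖H z‖ ≤ Mh) →
    ∀ n : ℕ, bestApprox n h ≤ Cρ * Mh / ρ ^ n

def networkErrors (f φ : ℝ → ℝ) (B L : ℝ) (m : ℕ) : Set ℝ :=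
  {e : ℝ | ∃ lam alp : Fin m → ℝ,
    (∑ k, |lam k|) ≤ B ∧ (∀ k, |alp k| ≤ L) ∧
    e = uNorm (fun x => f x - ∑ k, lam k * φ (alp k * x))}

lemma continuousOn_Icc_of_differentiableOn_bernsteinRegion {ρ : ℝ} (hρ : 1 ≤ ρ) {h : ℝ → ℝ}
    {H : ℂ → ℂ} (hH : DifferentiableOn ℂ H (bernsteinRegion ρ))
    (hHh : ∀ x ∈ Set.Icc (-1 : ℝ) 1, H x = h x) : ContinuousOn h (Set.Icc (-1 : ℝ) 1) := by
  have hre : ContinuousOn (fun x : ℝ => (H x).re) (Set.Icc (-1 : ℝ) 1) :=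
    Complex.continuous_re.comp_continuousOn (hH.continuousOn.comp
      Complex.continuous_ofReal.continuousOn fun _ hx => ofReal_mem_bernsteinRegion hρ hx)
  exact hre.congr fun x hx => by simp [hHh x hx]

lemma ofReal_mul_mem_image_mul_bernsteinRegion {ρ L : ℝ} (hρ : 1 ≤ ρ) (hL : 0 < L) {a : ℝ}
    (ha : |a| ≤ L) {z : ℂ} (hz : z ∈ bernsteinRegion ρ) :
    (a : ℂ) * z ∈ (fun z => (L : ℂ) * z) '' bernsteinRegion ρ := by
  have haL : |a / L| ≤ 1 := by rwa [abs_div, abs_of_pos hL, div_le_one hL]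
  refine ⟨((a / L : ℝ) : ℂ) * z, ofReal_mul_mem_bernsteinRegion hρ haL hz, ?_⟩
  have : (L : ℂ) ≠ 0 := by exact_mod_cast hL.ne'
  push_cast
  field_simp

section Network

variable {ρ L M : ℝ} {φ : ℝ → ℝ} {Φ : ℂ → ℂ} {m : ℕ} {lam alp : Fin m → ℝ}

lemma differentiableOn_network {U : Set ℂ} (hρ : 1 ≤ ρ) (hL : 0 < L)
    (hsub : (fun z => (L : ℂ) * z) '' bernsteinRegion ρ ⊆ U) (hΦ : DifferentiableOn ℂ Φ U)
    (halp : ∀ k, |alp k| ≤ L) :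
    DifferentiableOn ℂ (fun z => ∑ k, (lam k : ℂ) * Φ (alp k * z)) (bernsteinRegion ρ) :=
  DifferentiableOn.fun_sum fun k _ => (hΦ.comp (differentiable_id.const_mul _).differentiableOn
    fun _ hz => hsub (ofReal_mul_mem_image_mul_bernsteinRegion hρ hL (halp k) hz)).const_mul _

lemma network_ofReal (hext : ∀ x : ℝ, Φ x = φ x) (x : ℝ) :
    ∑ k, (lam k : ℂ) * Φ (alp k * x) = ((∑ k, lam k * φ (alp k * x) : ℝ) : ℂ) := by
  push_cast
  simp only [← Complex.ofReal_mul, hext]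

lemma norm_network_le (hρ : 1 ≤ ρ) (hL : 0 < L)
    (hM : ∀ w ∈ (fun z => (L : ℂ) * z) '' bernsteinRegion ρ, ‖Φ w‖ ≤ M)
    (halp : ∀ k, |alp k| ≤ L) {z : ℂ} (hz : z ∈ bernsteinRegion ρ) :
    ‖∑ k, (lam k : ℂ) * Φ (alp k * z)‖ ≤ (∑ k, |lam k|) * M :=
  calc ‖∑ k, (lam k : ℂ) * Φ (alp k * z)‖ ≤ ∑ k, ‖(lam k : ℂ) * Φ (alp k * z)‖ := norm_sum_le _ _
    _ ≤ ∑ k, |lam k| * M := Finset.sum_le_sum fun k _ => by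
        rw [norm_mul, Complex.norm_real, Real.norm_eq_abs]
        exact mul_le_mul_of_nonneg_left
          (hM _ (ofReal_mul_mem_image_mul_bernsteinRegion hρ hL (halp k) hz)) (abs_nonneg _)
    _ = (∑ k, |lam k|) * M := (Finset.sum_mul _ _ _).symm

end Network

lemma uNorm_mem_networkErrors (f φ : ℝ → ℝ) {B L : ℝ} (hB : 0 ≤ B) (hL : 0 ≤ L) (m : ℕ) :
    uNorm f ∈ networkErrors f φ B L m :=
  ⟨0, 0, by simpa using hB, fun _ => by simpa using hL, by simp⟩

lemma sInf_networkErrors_nonneg (f φ : ℝ → ℝ) (B L : ℝ) (m : ℕ) :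
    0 ≤ sInf (networkErrors f φ B L m) :=
  Real.sInf_nonneg <| by rintro _ ⟨_, _, _, _, rfl⟩; exact uNorm_nonneg _

lemma sInf_networkErrors_le_uNorm (f φ : ℝ → ℝ) {B L : ℝ} (hB : 0 ≤ B) (hL : 0 ≤ L) (m : ℕ) :
    sInf (networkErrors f φ B L m) ≤ uNorm f :=
  csInf_le ⟨0, by rintro _ ⟨_, _, _, _, rfl⟩; exact uNorm_nonneg _⟩
    (uNorm_mem_networkErrors f φ hB hL m)

lemma bestApprox_le_sInf_networkErrors_add {ρ L M B Cρ : ℝ} {φ : ℝ → ℝ} {Φ : ℂ → ℂ}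
    {U : Set ℂ} (hρ : 1 ≤ ρ) (hL : 0 < L) (hB : 0 ≤ B)
    (hsub : (fun z => (L : ℂ) * z) '' bernsteinRegion ρ ⊆ U) (hΦ : DifferentiableOn ℂ Φ U)
    (hext : ∀ x : ℝ, Φ x = φ x)
    (hM : ∀ w ∈ (fun z => (L : ℂ) * z) '' bernsteinRegion ρ, ‖Φ w‖ ≤ M)
    (hBern : BernsteinInequality ρ Cρ) {f : ℝ → ℝ} (hf : ContinuousOn f (Set.Icc (-1 : ℝ) 1))
    (m : ℕ) : bestApprox m f ≤ sInf (networkErrors f φ B L m) + Cρ * (B * M) / ρ ^ m := by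
  have hM₀ : 0 ≤ M := (norm_nonneg _).trans (hM _ ⟨1, one_mem_bernsteinRegion hρ, rfl⟩)
  rw [← sub_le_iff_le_add]
  refine le_csInf ⟨_, uNorm_mem_networkErrors f φ hB hL.le m⟩ ?_
  rintro _ ⟨lam, alp, hlam, halp, rfl⟩
  have hH := differentiableOn_network (lam := lam) hρ hL hsub hΦ halp
  have hHg : ∀ x ∈ Set.Icc (-1 : ℝ) 1, ∑ k, (lam k : ℂ) * Φ (alp k * x)
      = ((∑ k, lam k * φ (alp k * x) : ℝ) : ℂ) := fun x _ => network_ofReal hext x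
  have hHbd : ∀ z ∈ bernsteinRegion ρ, ‖∑ k, (lam k : ℂ) * Φ (alp k * z)‖ ≤ B * M :=
    fun z hz => (norm_network_le hρ hL hM halp hz).trans (mul_le_mul_of_nonneg_right hlam hM₀)
  rw [sub_le_iff_le_add]
  exact (bestApprox_le_uNorm_sub_add hf
    (continuousOn_Icc_of_differentiableOn_bernsteinRegion hρ hH hHg) m).trans
    (add_le_add le_rfl (hBern _ _ _ hH hHg hHbd m))

section RootTest

variable {u : ℕ → ℝ}

lemma tendsto_rpow_one_div_nat {c : ℝ} (hc : 0 < c) :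
    Tendsto (fun m : ℕ => c ^ ((1 : ℝ) / m)) atTop (nhds 1) := by
  simpa [Function.comp_def] using ((Real.continuousAt_const_rpow hc.ne').tendsto.comp
    tendsto_one_div_atTop_nhds_zero_nat)

lemma rpow_one_div_nat_le {K : ℝ} (hK : 1 ≤ K) (m : ℕ) : K ^ ((1 : ℝ) / m) ≤ K := by
  refine (Real.rpow_le_rpow_of_exponent_le hK ?_).trans_eq (Real.rpow_one K)
  rcases m.eq_zero_or_pos with rfl | hm
  · simp
  · exact div_le_one_of_le₀ (by exact_mod_cast hm) m.cast_nonneg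

lemma rpow_one_div_nat_le_max_one {m : ℕ} {K : ℝ} (hu₀ : 0 ≤ u m) (huK : u m ≤ K) :
    u m ^ ((1 : ℝ) / m) ≤ max 1 K ^ ((1 : ℝ) / m) :=
  Real.rpow_le_rpow hu₀ (huK.trans (le_max_right _ _)) (by positivity)

lemma isBoundedUnder_root (hu₀ : ∀ m, 0 ≤ u m) {K : ℝ} (huK : ∀ m, u m ≤ K) :
    IsBoundedUnder (· ≤ ·) atTop (fun m : ℕ => u m ^ ((1 : ℝ) / m)) :=
  isBoundedUnder_of ⟨max 1 K, fun m => (rpow_one_div_nat_le_max_one (hu₀ m) (huK m)).trans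
    (rpow_one_div_nat_le (le_max_left _ _) m)⟩

lemma limsup_root_le_one (hu₀ : ∀ m, 0 ≤ u m) {K : ℝ} (huK : ∀ m, u m ≤ K) :
    limsup (fun m : ℕ => u m ^ ((1 : ℝ) / m)) atTop ≤ 1 := by
  have hK : Tendsto (fun m : ℕ => max 1 K ^ ((1 : ℝ) / m)) atTop (nhds 1) :=
    tendsto_rpow_one_div_nat (by positivity)
  exact (limsup_le_limsup
    (Eventually.of_forall fun m => rpow_one_div_nat_le_max_one (hu₀ m) (huK m))
    (isCoboundedUnder_le_of_le atTop fun m => Real.rpow_nonneg (hu₀ m) _)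
    hK.isBoundedUnder_le).trans_eq hK.limsup_eq

lemma limsup_root_le_of_eventually_le_geometric (hu₀ : ∀ m, 0 ≤ u m) {C c : ℝ} (hC : 0 < C)
    (hc : 0 ≤ c) (h : ∀ᶠ m in atTop, u m ≤ C * c ^ m) :
    limsup (fun m : ℕ => u m ^ ((1 : ℝ) / m)) atTop ≤ c := by
  have hlim : Tendsto (fun m : ℕ => C ^ ((1 : ℝ) / m) * c) atTop (nhds c) := by
    simpa using (tendsto_rpow_one_div_nat hC).mul_const c
  have hroot : ∀ᶠ m : ℕ in atTop, u m ^ ((1 : ℝ) / m) ≤ C ^ ((1 : ℝ) / m) * c := by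
    filter_upwards [h, eventually_ne_atTop 0] with m hm hm₀
    calc u m ^ ((1 : ℝ) / m) ≤ (C * c ^ m) ^ ((1 : ℝ) / m) :=
          Real.rpow_le_rpow (hu₀ m) hm (by positivity)
      _ = C ^ ((1 : ℝ) / m) * c := by
          rw [Real.mul_rpow hC.le (by positivity), ← Real.rpow_natCast,
            ← Real.rpow_mul hc, mul_one_div_cancel (by exact_mod_cast hm₀), Real.rpow_one]
  exact (limsup_le_limsup hroot
    (isCoboundedUnder_le_of_le atTop fun m => Real.rpow_nonneg (hu₀ m) _)
    hlim.isBoundedUnder_le).trans_eq hlim.limsup_eq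

lemma eventually_le_pow_of_limsup_root_lt (hu₀ : ∀ m, 0 ≤ u m)
    (hb : IsBoundedUnder (· ≤ ·) atTop (fun m : ℕ => u m ^ ((1 : ℝ) / m))) {c : ℝ}
    (h : limsup (fun m : ℕ => u m ^ ((1 : ℝ) / m)) atTop < c) :
    ∀ᶠ m in atTop, u m ≤ c ^ m := by
  filter_upwards [eventually_lt_of_limsup_lt h hb, eventually_ne_atTop 0] with m hm hm₀
  calc u m = (u m ^ ((1 : ℝ) / m)) ^ m := by
        rw [← Real.rpow_natCast, ← Real.rpow_mul (hu₀ m), one_div_mul_cancel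
          (by exact_mod_cast hm₀), Real.rpow_one]
    _ ≤ c ^ m := pow_le_pow_left₀ (Real.rpow_nonneg (hu₀ m) _) hm.le m

lemma limsup_root_eq_one_of_le_add_geometric {v : ℕ → ℝ} (hu₀ : ∀ m, 0 ≤ u m) {K : ℝ}
    (huK : ∀ m, u m ≤ K) (hv₀ : ∀ m, 0 ≤ v m) {D r : ℝ} (hD : 0 ≤ D) (hr₀ : 0 ≤ r)
    (hr₁ : r < 1) (hvu : ∀ m, v m ≤ u m + D * r ^ m)
    (hv : 1 ≤ limsup (fun m : ℕ => v m ^ ((1 : ℝ) / m)) atTop) :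
    limsup (fun m : ℕ => u m ^ ((1 : ℝ) / m)) atTop = 1 := by
  refine (limsup_root_le_one hu₀ huK).antisymm (not_lt.mp fun hlt => ?_)
  obtain ⟨c, hlc, hc₁⟩ := exists_between (max_lt hlt hr₁)
  have hc₀ : 0 ≤ c := hr₀.trans ((le_max_right _ _).trans hlc.le)
  have hv_geom : ∀ᶠ m in atTop, v m ≤ (1 + D) * c ^ m := by
    filter_upwards [eventually_le_pow_of_limsup_root_lt hu₀ (isBoundedUnder_root hu₀ huK)
      ((le_max_left _ _).trans_lt hlc)] with m hm
    have hrc : r ^ m ≤ c ^ m := pow_le_pow_left₀ hr₀ ((le_max_right _ _).trans hlc.le) m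
    nlinarith [hvu m]
  linarith [limsup_root_le_of_eventually_le_geometric hv₀ (by linarith) hc₀ hv_geom]

end RootTest

theorem stmt19_general (ρ L M B Cρ : ℝ) (hρ : 1 < ρ) (hL : 1 ≤ L) (hB : 0 < B) (hCρ : 0 < Cρ)
    (φ : ℝ → ℝ) (Φ : ℂ → ℂ) (U : Set ℂ)
    (hsub : (fun z => (L : ℂ) * z) '' bernsteinRegion ρ ⊆ U)
    (hΦ : DifferentiableOn ℂ Φ U) (hext : ∀ x : ℝ, Φ x = φ x)
    (hM : ∀ w ∈ (fun z => (L : ℂ) * z) '' bernsteinRegion ρ, ‖Φ w‖ ≤ M)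
    (hBern : ∀ (h : ℝ → ℝ) (H : ℂ → ℂ) (Mh : ℝ),
      DifferentiableOn ℂ H (bernsteinRegion ρ) →
      (∀ x ∈ Set.Icc (-1 : ℝ) 1, H x = h x) →
      (∀ z ∈ bernsteinRegion ρ, ‖H z‖ ≤ Mh) →
      ∀ n : ℕ, bestApprox n h ≤ Cρ * Mh / ρ ^ n)
    (f : ℝ → ℝ) (hf : ContinuousOn f (Set.Icc (-1 : ℝ) 1))
    (hna : limsup (fun m : ℕ => (bestApprox m f) ^ ((1 : ℝ) / m)) atTop = 1)
    (ε : ℕ → ℝ)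
    (hε : ∀ m : ℕ, ε m = sInf {e : ℝ | ∃ lam alp : Fin m → ℝ,
      (∑ k, |lam k|) ≤ B ∧ (∀ k, |alp k| ≤ L) ∧
      e = uNorm (fun x => f x - ∑ k, lam k * φ (alp k * x))}) :
    limsup (fun m : ℕ => (ε m) ^ ((1 : ℝ) / m)) atTop = 1 := by
  have hρ₁ : 1 ≤ ρ := hρ.le
  have hL₀ : 0 < L := by linarith
  have hM₀ : 0 ≤ M := (norm_nonneg _).trans (hM _ ⟨1, one_mem_bernsteinRegion hρ₁, rfl⟩)
  have hε' (m : ℕ) : ε m = sInf (networkErrors f φ B L m) := hε m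
  have hbarrier (m : ℕ) : bestApprox m f ≤ ε m + Cρ * (B * M) * ρ⁻¹ ^ m := by
    rw [hε', inv_pow, ← div_eq_mul_inv]
    exact bestApprox_le_sInf_networkErrors_add hρ₁ hL₀ hB.le hsub hΦ hext hM hBern hf m
  refine limsup_root_eq_one_of_le_add_geometric (K := uNorm f) (fun m => ?_) (fun m => ?_)
    (bestApprox_nonneg · f) (by positivity) (by positivity) (inv_lt_one_of_one_lt₀ hρ) hbarrier
    hna.ge
  · exact (hε' m).symm ▸ sInf_networkErrors_nonneg f φ B L m
  · exact (hε' m).symm ▸ sInf_networkErrors_le_uNorm f φ hB.le hL₀.le m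

/-- on non-analytic targets (limsup E_m(f)^{1/m} = 1), constrained
analytic-activation networks cannot achieve geometric decay: limsup ε_m^{1/m} = 1. -/
theorem stmt19 (ρ L M B Cρ : ℝ) (hρ : 1 < ρ) (hL : 1 ≤ L) (hB : 0 < B) (hCρ : 0 < Cρ)
    (φ : ℝ → ℝ) (Φ : ℂ → ℂ) (U : Set ℂ) (hU : IsOpen U)
    (hsub : (fun z => (L : ℂ) * z) '' bernsteinRegion ρ ⊆ U)
    (hΦ : DifferentiableOn ℂ Φ U) (hext : ∀ x : ℝ, Φ x = φ x)
    (hM : ∀ w ∈ (fun z => (L : ℂ) * z) '' bernsteinRegion ρ, ‖Φ w‖ ≤ M)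
    (hBern : ∀ (h : ℝ → ℝ) (H : ℂ → ℂ) (Mh : ℝ),
      DifferentiableOn ℂ H (bernsteinRegion ρ) →
      (∀ x ∈ Set.Icc (-1 : ℝ) 1, H x = h x) →
      (∀ z ∈ bernsteinRegion ρ, ‖H z‖ ≤ Mh) →
      ∀ n : ℕ, bestApprox n h ≤ Cρ * Mh / ρ ^ n)
    (f : ℝ → ℝ) (hf : ContinuousOn f (Set.Icc (-1 : ℝ) 1))
    (hna : limsup (fun m : ℕ => (bestApprox m f) ^ ((1 : ℝ) / m)) atTop = 1)
    (ε : ℕ → ℝ)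
    (hε : ∀ m : ℕ, ε m = sInf {e : ℝ | ∃ lam alp : Fin m → ℝ,
      (∑ k, |lam k|) ≤ B ∧ (∀ k, |alp k| ≤ L) ∧
      e = uNorm (fun x => f x - ∑ k, lam k * φ (alp k * x))}) :
    limsup (fun m : ℕ => (ε m) ^ ((1 : ℝ) / m)) atTop = 1 :=
  stmt19_general ρ L M B Cρ hρ hL hB hCρ φ Φ U hsub hΦ hext hM hBern f hf hna ε hε
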